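/- arXiv:1809.02733 — 2 statements merged into one kernel-verified Lean document; each statement's English description precedes it below -/
import Mathlib

section
/- Let m be a positive integer and q a prime with q > m!. Let A be an elementary abelian group of order q² acting by automorphisms on a finite group G with gcd(q,|G|) = 1, such that |C_G(a)| ≤ m for every nontrivial a ∈ A. Then |G| ≤ m. -/
/-- The subgroup of fixed points of a single automorphism `φ a`. -/
def fixedSub {A G : Type*} [Group A] [Group G] (φ : A →* MulAut G) (a : A) : Subgroup G where
  carrier := {g : G | φ a g = g}
  one_mem' := map_one _
  mul_mem' := by
    intro x y hx hy
    simp only [Set.mem_setOf_eq, map_mul] at *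
    rw [hx, hy]
  inv_mem' := by
    intro x hx
    simp only [Set.mem_setOf_eq, map_inv] at *
    rw [hx]

/-!
Each `C_G(a)` is `A`-invariant because `A` is abelian, and `A` acts on it through `Aut(C_G(a))`,
a group of order at most `m! < q`; since `A` has exponent `q`, that action is trivial, so
`C_G(a) ≤ C_G(b)` for all `a, b ≠ 1`. On the other hand, a group on which an elementary abelian
group of order `q²` acts coprimely is generated by the `C_G(a)`, `a ≠ 1`. For abelian `G` this is
the identity `v ^ q = (∏_B N_B v) * (N_A v)⁻¹`, where `B` runs over the `q + 1` subgroups of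
order `q` and `N_B v = ∏_{b ∈ B} b • v` is fixed by `B`; in general it follows by induction,
through an invariant Sylow subgroup when `G` is not a `p`-group, and through the centre and the
quotient by it when it is, since fixed points lift modulo invariant normal subgroups of order
prime to `q`. Hence `G = C_G(b)`.
-/

open Subgroup

section Actions

variable {A G : Type*} [Group A] [Group G]

def AutInvariant (φ : A →* MulAut G) (N : Subgroup G) : Prop :=
  ∀ a : A, ∀ g ∈ N, φ a g ∈ N

def fixedSpan (φ : A →* MulAut G) : Subgroup G :=
  ⨆ (a : A) (_ : a ≠ 1), fixedSub φ a

lemma mem_fixedSub {φ : A →* MulAut G} {a : A} {g : G} : g ∈ fixedSub φ a ↔ φ a g = g :=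
  Iff.rfl

lemma fixedSub_le_fixedSpan (φ : A →* MulAut G) {a : A} (ha : a ≠ 1) :
    fixedSub φ a ≤ fixedSpan φ :=
  le_iSup₂ (f := fun a (_ : a ≠ 1) => fixedSub φ a) a ha

lemma autInvariant_center (φ : A →* MulAut G) : AutInvariant φ (center G) :=
  fun a => characteristic_iff_le_comap.mp inferInstance (φ a)

lemma autInvariant_fixedSub {A : Type*} [CommGroup A] (φ : A →* MulAut G) (a : A) :
    AutInvariant φ (fixedSub φ a) := by
  intro b g hg
  rw [mem_fixedSub] at hg ⊢
  rw [← MulAut.mul_apply, ← map_mul, mul_comm, map_mul, MulAut.mul_apply, hg]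

def restrictAut (φ : A →* MulAut G) {N : Subgroup G} (hN : AutInvariant φ N) :
    A →* MulAut N where
  toFun a :=
    { toFun := fun x => ⟨φ a x, hN a x x.2⟩
      invFun := fun x => ⟨φ a⁻¹ x, hN a⁻¹ x x.2⟩
      left_inv := fun x => Subtype.ext (by simp)
      right_inv := fun x => Subtype.ext (by simp)
      map_mul' := fun x y => Subtype.ext (map_mul (φ a) (x : G) y) }
  map_one' := by ext; simp
  map_mul' a b := by ext; simp [MulAut.mul_apply]

def quotAut (φ : A →* MulAut G) {N : Subgroup G} [N.Normal] (hN : AutInvariant φ N) :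
    A →* MulAut (G ⧸ N) where
  toFun a :=
    { toFun := QuotientGroup.map N N (φ a).toMonoidHom (hN a)
      invFun := QuotientGroup.map N N (φ a⁻¹).toMonoidHom (hN a⁻¹)
      left_inv := fun x => by
        induction x using QuotientGroup.induction_on with | H g => simp
      right_inv := fun x => by
        induction x using QuotientGroup.induction_on with | H g => simp
      map_mul' := map_mul _ }
  map_one' := by
    ext x
    induction x using QuotientGroup.induction_on with | H g => simp
  map_mul' a b := by
    ext x
    induction x using QuotientGroup.induction_on with | H g => simp [MulAut.mul_apply]

lemma le_fixedSpan_of_restrict {φ : A →* MulAut G} {H : Subgroup G} (hH : AutInvariant φ H)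
    (htop : fixedSpan (restrictAut φ hH) = ⊤) : H ≤ fixedSpan φ := by
  have hle : fixedSpan (restrictAut φ hH) ≤ (fixedSpan φ).comap H.subtype :=
    iSup₂_le fun a ha x hx => fixedSub_le_fixedSpan φ ha (congrArg Subtype.val hx)
  exact fun g hg => hle (htop ▸ mem_top (⟨g, hg⟩ : H))

end Actions

lemma Subgroup.mem_of_pow_mem_of_coprime {G : Type*} [Group G] (K : Subgroup G) {n : ℕ}
    (hn : (Nat.card G).Coprime n) {g : G} (hg : g ^ n ∈ K) : g ∈ K := by
  rw [← (powCoprime hn).symm_apply_apply g]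
  exact zpow_mem hg _

lemma nontrivial_of_card_eq_sq {q : ℕ} (hq : q.Prime) {α : Type*} [Finite α]
    (hcard : Nat.card α = q ^ 2) : Nontrivial α :=
  Finite.one_lt_card_iff_nontrivial.mp (hcard ▸ Nat.one_lt_pow two_ne_zero hq.one_lt)

section Coprime

variable {q : ℕ} [Fact q.Prime] {A G : Type*} [Group A] [Group G]
  {φ : A →* MulAut G}

lemma fixedSub_quotAut_le_map (hA : IsPGroup q A) {N : Subgroup G} [N.Normal]
    (hN : AutInvariant φ N) (hqN : ¬ q ∣ Nat.card N) (a : A) :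
    fixedSub (quotAut φ hN) a ≤ (fixedSub φ a).map (QuotientGroup.mk' N) := by
  intro x hx
  have hpow : ∀ b ∈ zpowers a, quotAut φ hN b x = x := by
    rintro _ ⟨k, rfl⟩
    rw [map_zpow]
    exact MulAction.mem_stabilizer_iff.mp
      ((MulAction.stabilizer (MulAut (G ⧸ N)) x).zpow_mem hx k)
  let : MulAction (zpowers a) G := MulAction.compHom G (φ.comp (zpowers a).subtype)
  let fiber : SubMulAction (zpowers a) G :=
    { carrier := QuotientGroup.mk ⁻¹' {x}
      smul_mem' := fun b g (hg : (g : G ⧸ N) = x) => by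
        change ((φ b g : G) : G ⧸ N) = x
        rw [← hpow b b.2, ← hg]
        rfl }
  have hcard : Nat.card fiber = Nat.card N := by
    change Nat.card (QuotientGroup.mk ⁻¹' {x}) = _
    rw [Nat.card_congr (QuotientGroup.preimageMkEquivSubgroupProdSet N {x}), Nat.card_prod]
    simp
  obtain ⟨⟨y, hy⟩, hfix⟩ :=
    (hA.to_subgroup (zpowers a)).nonempty_fixed_point_of_prime_not_dvd_card fiber
      (hcard ▸ hqN)
  exact ⟨y, congrArg Subtype.val (hfix ⟨a, mem_zpowers a⟩), hy⟩

lemma fixedSpan_eq_top_of_quotient (hA : IsPGroup q A) {N : Subgroup G} [N.Normal]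
    (hN : AutInvariant φ N) (hqN : ¬ q ∣ Nat.card N) (hNK : N ≤ fixedSpan φ)
    (hQ : fixedSpan (quotAut φ hN) = ⊤) : fixedSpan φ = ⊤ := by
  have hle : fixedSpan (quotAut φ hN) ≤ (fixedSpan φ).map (QuotientGroup.mk' N) :=
    iSup₂_le fun a ha =>
      (fixedSub_quotAut_le_map hA hN hqN a).trans (map_mono (fixedSub_le_fixedSpan φ ha))
  have hcomap := comap_mono (f := QuotientGroup.mk' N) (hQ ▸ hle)
  rw [comap_top, comap_map_eq, QuotientGroup.ker_mk', sup_eq_left.mpr hNK] at hcomap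
  exact top_unique hcomap

lemma exists_sylow_autInvariant [Finite G] (hA : IsPGroup q A) (φ : A →* MulAut G)
    (hco : ¬ q ∣ Nat.card G) (p : ℕ) [Fact p.Prime] :
    ∃ P : Sylow p G, AutInvariant φ P := by
  let : MulDistribMulAction A G := MulDistribMulAction.compHom G φ
  have hqSyl : ¬ q ∣ Nat.card (Sylow p G) := fun h =>
    hco (h.trans ((Sylow.card_dvd_index default).trans (index_dvd_card _)))
  obtain ⟨P, hP⟩ := hA.nonempty_fixed_point_of_prime_not_dvd_card (Sylow p G) hqSyl
  refine ⟨P, fun a g hg => ?_⟩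
  rw [← hP a]
  exact smul_mem_pointwise_smul g a (P : Subgroup G) hg

end Coprime

section ElementaryAbelian

open Finset
open scoped Classical

variable {q : ℕ} [Fact q.Prime] {A : Type*} [Group A]

section Fintype

variable [Fintype A]

lemma zpowers_eq_of_mem (hexp : ∀ a : A, a ^ q = 1) {a c : A} (hc : c ∈ zpowers a)
    (hc1 : c ≠ 1) : zpowers c = zpowers a := by
  have ha1 : a ≠ 1 := by
    rintro rfl
    exact hc1 (by simpa using hc)
  refine eq_of_le_of_card_ge (zpowers_le.mpr hc) ?_
  rw [Nat.card_zpowers, Nat.card_zpowers, orderOf_eq_prime (hexp a) ha1,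
    orderOf_eq_prime (hexp c) hc1]

variable (A) in
noncomputable def cyclicSubgroups : Finset (Subgroup A) :=
  (univ.erase 1).image zpowers

lemma biUnion_cyclicSubgroups :
    (cyclicSubgroups A).biUnion (fun B => ({b | b ∈ B} : Finset A).erase 1) = univ.erase 1 := by
  ext c
  simp only [cyclicSubgroups, mem_biUnion, mem_image, mem_erase, mem_filter, mem_univ, and_true,
    true_and]
  exact ⟨fun ⟨_, _, hc1, _⟩ => hc1,
    fun hc1 => ⟨zpowers c, ⟨c, hc1, rfl⟩, hc1, mem_zpowers c⟩⟩

lemma pairwiseDisjoint_cyclicSubgroups (hexp : ∀ a : A, a ^ q = 1) :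
    (cyclicSubgroups A : Set (Subgroup A)).PairwiseDisjoint
      (fun B => ({b | b ∈ B} : Finset A).erase 1) := by
  intro B hB B' hB' hne
  simp only [cyclicSubgroups, coe_image, Set.mem_image, mem_coe, mem_erase] at hB hB'
  obtain ⟨a, -, rfl⟩ := hB
  obtain ⟨a', -, rfl⟩ := hB'
  refine disjoint_left.mpr fun c hc hc' => hne ?_
  simp only [mem_erase, mem_filter, mem_univ, true_and] at hc hc'
  rw [← zpowers_eq_of_mem hexp hc.2 hc.1, zpowers_eq_of_mem hexp hc'.2 hc'.1]

lemma card_erase_one_of_mem_cyclicSubgroups (hexp : ∀ a : A, a ^ q = 1) {B : Subgroup A}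
    (hB : B ∈ cyclicSubgroups A) : #(({b | b ∈ B} : Finset A).erase 1) = q - 1 := by
  simp only [cyclicSubgroups, mem_image, mem_erase] at hB
  obtain ⟨a, ⟨ha1, -⟩, rfl⟩ := hB
  rw [card_erase_of_mem (by simp [one_mem]), ← Fintype.card_subtype, ← Nat.card_eq_fintype_card,
    Nat.card_zpowers, orderOf_eq_prime (hexp a) ha1]

lemma card_cyclicSubgroups (hcard : Nat.card A = q ^ 2) (hexp : ∀ a : A, a ^ q = 1) :
    #(cyclicSubgroups A) = q + 1 := by
  have hsum := card_biUnion (pairwiseDisjoint_cyclicSubgroups hexp)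
  rw [biUnion_cyclicSubgroups, sum_congr rfl fun B hB =>
    card_erase_one_of_mem_cyclicSubgroups hexp hB, sum_const, smul_eq_mul,
    card_erase_of_mem (mem_univ 1), card_univ, ← Nat.card_eq_fintype_card, hcard] at hsum
  have hq := (Fact.out : q.Prime).two_le
  refine Nat.eq_of_mul_eq_mul_right (by omega : 0 < q - 1) ?_
  rw [← hsum]
  zify [hq, (by nlinarith : 1 ≤ q ^ 2), (by omega : 1 ≤ q)]
  ring

lemma prod_prod_cyclicSubgroups {M : Type*} [CommMonoid M] (hcard : Nat.card A = q ^ 2)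
    (hexp : ∀ a : A, a ^ q = 1) (f : A → M) :
    ∏ B ∈ cyclicSubgroups A, ∏ b ∈ ({b | b ∈ B} : Finset A), f b =
      f 1 ^ (q + 1) * ∏ a ∈ univ.erase 1, f a := by
  rw [← card_cyclicSubgroups hcard hexp, ← biUnion_cyclicSubgroups,
    prod_biUnion (pairwiseDisjoint_cyclicSubgroups hexp), ← prod_const, ← prod_mul_distrib]
  exact prod_congr rfl fun B _ => (mul_prod_erase _ f (by simp [one_mem])).symm

lemma prod_apply_mem_fixedSub {V : Type*} [CommGroup V] (φ : A →* MulAut V)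
    {B : Subgroup A} {c : A} (hc : c ∈ B) (v : V) :
    ∏ b ∈ ({b | b ∈ B} : Finset A), φ b v ∈ fixedSub φ c := by
  rw [mem_fixedSub, map_prod]
  refine prod_equiv (Equiv.mulLeft c) (by simp [mul_mem_cancel_left hc]) fun b _ => ?_
  simp [MulAut.mul_apply]

end Fintype

theorem fixedSpan_eq_top_of_commGroup [Finite A] (hcard : Nat.card A = q ^ 2)
    (hexp : ∀ a : A, a ^ q = 1) {V : Type*} [CommGroup V] (φ : A →* MulAut V)
    (hco : ¬ q ∣ Nat.card V) : fixedSpan φ = ⊤ := by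
  have := Fintype.ofFinite A
  have := nontrivial_of_card_eq_sq Fact.out hcard
  obtain ⟨a₀, ha₀⟩ := exists_ne (1 : A)
  rw [eq_top_iff']
  intro v
  let norm (B : Subgroup A) : V := ∏ b ∈ ({b | b ∈ B} : Finset A), φ b v
  have hcyc : ∀ B ∈ cyclicSubgroups A, norm B ∈ fixedSpan φ := by
    intro B hB
    obtain ⟨a, ha, rfl⟩ := mem_image.mp hB
    exact fixedSub_le_fixedSpan φ (ne_of_mem_erase ha)
      (prod_apply_mem_fixedSub φ (mem_zpowers a) v)
  have htop : norm ⊤ ∈ fixedSpan φ :=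
    fixedSub_le_fixedSpan φ ha₀ (prod_apply_mem_fixedSub φ (mem_top a₀) v)
  -- Each `a ≠ 1` lies in exactly one of the `q + 1` cyclic subgroups.
  have hpow : v ^ q = (∏ B ∈ cyclicSubgroups A, norm B) * (norm ⊤)⁻¹ := by
    simp only [norm, prod_prod_cyclicSubgroups hcard hexp, mem_top, filter_true,
      ← mul_prod_erase univ (fun a => φ a v) (mem_univ 1), map_one, MulAut.one_apply]
    group
  exact mem_of_pow_mem_of_coprime _ ((Nat.Prime.coprime_iff_not_dvd Fact.out).mpr hco).symm
    (hpow ▸ mul_mem (prod_mem hcyc) (inv_mem htop))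

end ElementaryAbelian

theorem fixedSpan_eq_top {q : ℕ} [Fact q.Prime] {A : Type*} [Group A] [Finite A]
    (hcard : Nat.card A = q ^ 2) (hexp : ∀ a : A, a ^ q = 1) {G : Type*} [Group G] [Finite G]
    (φ : A →* MulAut G) (hco : ¬ q ∣ Nat.card G) : fixedSpan φ = ⊤ := by
  have hA : IsPGroup q A := fun a => ⟨1, by rw [pow_one, hexp]⟩
  induction hn : Nat.card G using Nat.strong_induction_on generalizing G with
  | _ n ih =>
  have hsub : ∀ H : Subgroup G, AutInvariant φ H → Nat.card H < n → H ≤ fixedSpan φ :=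
    fun H hH hlt => le_fixedSpan_of_restrict hH
      (ih _ hlt (restrictAut φ hH) (fun h => hco (h.trans (card_subgroup_dvd_card H))) rfl)
  rcases subsingleton_or_nontrivial G with hG | hG
  · exact Subsingleton.elim _ _
  by_cases hpG : ∃ p, p.Prime ∧ IsPGroup p G
  · obtain ⟨p, hp, hpG⟩ := hpG
    have := Fact.mk hp
    have hZ := autInvariant_center φ
    let : CommGroup (center G) := Group.commGroupOfCenterEqTop center_eq_top
    have hqZ : ¬ q ∣ Nat.card (center G) := fun h => hco (h.trans (card_subgroup_dvd_card _))
    have hGZ : Nat.card (G ⧸ center G) < n := by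
      have := hpG.center_nontrivial
      rw [← hn, card_eq_card_quotient_mul_card_subgroup (center G)]
      exact lt_mul_of_one_lt_right Nat.card_pos (Finite.one_lt_card_iff_nontrivial.mpr this)
    exact fixedSpan_eq_top_of_quotient hA hZ hqZ
      (le_fixedSpan_of_restrict hZ (fixedSpan_eq_top_of_commGroup hcard hexp _ hqZ))
      (ih _ hGZ (quotAut φ hZ) (fun h => hco (h.trans (card_quotient_dvd_card _))) rfl)
  · push Not at hpG
    rw [← index_eq_one, Nat.eq_one_iff_not_exists_prime_dvd]
    intro p hp hdvd
    have := Fact.mk hp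
    obtain ⟨P, hP⟩ := exists_sylow_autInvariant hA φ hco p
    have hPlt : Nat.card P < n := by
      rw [← hn]
      refine (card_le_card_group _).lt_of_ne fun h => hpG p hp ?_
      exact IsPGroup.iff_card.mpr (h ▸ IsPGroup.iff_card.mp P.isPGroup')
    exact P.not_dvd_index (hdvd.trans (index_dvd_of_le (hsub P hP hPlt)))

lemma MulAut.eq_one_of_pow_eq_one_of_factorial_lt {H : Type*} [Group H] [Finite H] {q : ℕ}
    (hq : q.Prime) {e : MulAut H} (he : e ^ q = 1) (hlt : (Nat.card H).factorial < q) :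
    e = 1 := by
  have : Finite (MulAut H) := Finite.of_injective _ MulEquiv.toEquiv_injective
  by_contra hne
  have hdvd : q ∣ Nat.card (MulAut H) :=
    orderOf_eq_prime (hp := ⟨hq⟩) he hne ▸ orderOf_dvd_natCard e
  have hle : Nat.card (MulAut H) ≤ (Nat.card H).factorial :=
    Nat.card_perm (α := H) ▸ Nat.card_le_card_of_injective _ MulEquiv.toEquiv_injective
  exact absurd ((Nat.le_of_dvd Nat.card_pos hdvd).trans hle) hlt.not_ge

lemma le_fixedSub_of_factorial_card_lt {q : ℕ} (hq : q.Prime) {A G : Type*} [Group A] [Group G]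
    {φ : A →* MulAut G} (hexp : ∀ a : A, a ^ q = 1) {H : Subgroup G} [Finite H]
    (hH : AutInvariant φ H) (hlt : (Nat.card H).factorial < q) (b : A) : H ≤ fixedSub φ b := by
  have hb : restrictAut φ hH b = 1 :=
    MulAut.eq_one_of_pow_eq_one_of_factorial_lt hq (by rw [← map_pow, hexp, map_one]) hlt
  exact fun g hg => congrArg Subtype.val (DFunLike.congr_fun hb (⟨g, hg⟩ : H))

theorem card_le_of_large_prime_general {m q : ℕ} (hq : q.Prime)
    (hqm : Nat.factorial m < q) {A G : Type*} [CommGroup A] [Finite A] [Group G] [Finite G]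
    (hcard : Nat.card A = q ^ 2) (hexp : ∀ a : A, a ^ q = 1)
    (φ : A →* MulAut G) (hco : ¬ q ∣ Nat.card G)
    (hfix : ∀ a : A, a ≠ 1 → Nat.card (fixedSub φ a) ≤ m) :
    Nat.card G ≤ m := by
  have := Fact.mk hq
  have := nontrivial_of_card_eq_sq hq hcard
  obtain ⟨b, hb⟩ := exists_ne (1 : A)
  have hle : fixedSpan φ ≤ fixedSub φ b := iSup₂_le fun a ha =>
    le_fixedSub_of_factorial_card_lt hq hexp (autInvariant_fixedSub φ a)
      ((Nat.factorial_le (hfix a ha)).trans_lt hqm) b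
  have htop : fixedSub φ b = ⊤ := top_unique (fixedSpan_eq_top hcard hexp φ hco ▸ hle)
  calc Nat.card G = Nat.card (fixedSub φ b) := by rw [htop, card_top]
    _ ≤ m := hfix b hb

theorem card_le_of_large_prime {m q : ℕ} (hm : 0 < m) (hq : q.Prime)
    (hqm : Nat.factorial m < q) {A G : Type*} [CommGroup A] [Finite A] [Group G] [Finite G]
    (hcard : Nat.card A = q ^ 2) (hexp : ∀ a : A, a ^ q = 1)
    (φ : A →* MulAut G) (hco : ¬ q ∣ Nat.card G)
    (hfix : ∀ a : A, a ≠ 1 → Nat.card (fixedSub φ a) ≤ m) :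
    Nat.card G ≤ m :=
  card_le_of_large_prime_general hq hqm hcard hexp φ hco hfix
end

section
/- Let p be a prime, P a finite p-group, and A a finite p'-group of automorphisms of P. If |[P,a]| ≤ m for every a ∈ A, then |A| is bounded by a function of m only. -/
/-!
Take a maximal series `1 = N₀ ≤ N₁ ≤ ⋯ ≤ N_s = P` of `A`-invariant subgroups and let `C_i` be
the kernel of the action of `A` on `N_{i+1}/N_i` (the normalizer condition in the `p`-group
`N_{i+1}` makes `N_i` normal in it). A `p`-group on which `Γ ≤ Aut W` acts irreducibly is elementary
abelian, every nontrivial `Γ`-orbit generates it, and by Burnside's lemma there are at least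
`|W|/m` orbits when all `|[W, γ]| ≤ m`; this bounds `|W|` by `m ^ (2m)` as soon as `Γ ≠ 1`, hence
`|A : C_i| ≤ T := (m ^ (2m)) ^ (m ^ (2m))`. By coprimality, an element of `A` centralizing `N_i`
and `N_{i+1}/N_i` centralizes `N_{i+1}`, so `|A| ≤ ∏ |A : C_i|`. Finally `a ∉ C_i` forces
`[P, a] ∩ N_i < [P, a] ∩ N_{i+1}`, so every `a` lies outside at most `log₂ m` of the `C_i`,
whereas a proper `C_i` misses at least half of `A`. Counting pairs, at most `2 log₂ m` of the
`C_i` are proper, and `|A| ≤ T ^ (2 log₂ m)`.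
-/

/-- The subgroup `[P, a]` generated by `x⁻¹ * a x` for an automorphism `a` of `P`. -/
def commOfAut {P : Type*} [Group P] (a : MulAut P) : Subgroup P :=
  Subgroup.closure {x : P | ∃ g : P, x = g⁻¹ * a g}

open Subgroup MulAction Finset Pointwise

namespace CoprimeAction

section Counting

variable {G : Type*} [Group G]

theorem card_eq_relIndex_mul_card {H K : Subgroup G} (hKH : K ≤ H) :
    Nat.card H = K.relIndex H * Nat.card K := by
  rw [← card_mul_index (K.subgroupOf H), relIndex, mul_comm,
    Nat.card_congr (subgroupOfEquivOfLe hKH).toEquiv]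

theorem two_mul_card_le_card_of_lt [Finite G] {H K : Subgroup G} (hKH : K < H) :
    2 * Nat.card K ≤ Nat.card H := by
  have h0 : K.relIndex H ≠ 0 := isFiniteRelIndex_of_finiteIndex.relIndex_ne_zero
  have h1 : K.relIndex H ≠ 1 := fun h => hKH.not_ge (relIndex_eq_one.mp h)
  rw [card_eq_relIndex_mul_card hKH.le]
  exact Nat.mul_le_mul_right _ (by omega)

open scoped Classical in
theorem two_pow_card_filter_lt_le_card [Finite G] (H : ℕ → Subgroup G) {s : ℕ}
    (hH : ∀ i < s, H i ≤ H (i + 1)) :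
    2 ^ #{i ∈ range s | H i < H (i + 1)} ≤ Nat.card (H s) := by
  induction s with
  | zero =>
    simp only [range_zero, filter_empty, card_empty, pow_zero]
    exact Nat.card_pos
  | succ s ih =>
    have ih := ih fun i hi => hH i (by omega)
    rw [range_add_one, filter_insert]
    split_ifs with hlt
    · rw [card_insert_of_notMem (by simp), pow_succ']
      exact (Nat.mul_le_mul_left 2 ih).trans (two_mul_card_le_card_of_lt hlt)
    · exact ih.trans (card_le_of_le (hH s (by omega)))

theorem card_le_index_mul_card_of_inf_le [Finite G] {H K L : Subgroup G} (hHL : H ⊓ L ≤ K) :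
    Nat.card H ≤ L.index * Nat.card K := calc
  Nat.card H = L.relIndex H * Nat.card ↥(H ⊓ L) := by
    rw [← inf_relIndex_left, card_eq_relIndex_mul_card inf_le_left]
  _ ≤ L.index * Nat.card K := by
    refine Nat.mul_le_mul ?_ (card_le_of_le hHL)
    rw [← relIndex_top_right]
    exact relIndex_le_of_le_right le_top isFiniteRelIndex_of_finiteIndex.relIndex_ne_zero

theorem card_le_prod_index_mul_card [Finite G] (B L : ℕ → Subgroup G) {s : ℕ}
    (hBL : ∀ i < s, B i ⊓ L i ≤ B (i + 1)) :
    Nat.card (B 0) ≤ (∏ i ∈ range s, (L i).index) * Nat.card (B s) := by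
  induction s with
  | zero => simp
  | succ s ih =>
    calc Nat.card (B 0) ≤ (∏ i ∈ range s, (L i).index) * Nat.card (B s) :=
          ih fun i hi => hBL i (by omega)
      _ ≤ (∏ i ∈ range s, (L i).index) * ((L s).index * Nat.card (B (s + 1))) :=
          Nat.mul_le_mul_left _ (card_le_index_mul_card_of_inf_le (hBL s (by omega)))
      _ = (∏ i ∈ range (s + 1), (L i).index) * Nat.card (B (s + 1)) := by
          rw [prod_range_succ, mul_assoc]

open scoped Classical in
theorem card_le_two_mul_card_filter_notMem [Fintype G] {L : Subgroup G} (hL : L ≠ ⊤) :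
    Fintype.card G ≤ 2 * #{g | g ∉ L} := by
  have hsplit : #{g | g ∈ L} + #{g | g ∉ L} = Fintype.card G :=
    card_filter_add_card_filter_not _
  have hcard : #{g | g ∈ L} = Fintype.card L := (Fintype.card_subtype _).symm
  have hL2 : 2 * Nat.card L ≤ Nat.card G := by
    rw [← index_mul_card L]
    exact Nat.mul_le_mul_right _ (one_lt_index_of_ne_top hL)
  rw [Nat.card_eq_fintype_card, Nat.card_eq_fintype_card] at hL2
  omega

open scoped Classical in
theorem card_filter_ne_top_le_two_mul [Finite G] {ι : Type*} (L : ι → Subgroup G)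
    (I : Finset ι) {k : ℕ} (hk : ∀ g : G, #{i ∈ I | g ∉ L i} ≤ k) :
    #{i ∈ I | L i ≠ ⊤} ≤ 2 * k := by
  have := Fintype.ofFinite G
  have hdouble : ∑ i ∈ I, #{g | g ∉ L i} = ∑ g, #{i ∈ I | g ∉ L i} :=
    sum_card_bipartiteAbove_eq_sum_card_bipartiteBelow fun i g => g ∉ L i
  refine Nat.le_of_mul_le_mul_right ?_ (Fintype.card_pos (α := G))
  calc #{i ∈ I | L i ≠ ⊤} * Fintype.card G = ∑ i ∈ I with L i ≠ ⊤, Fintype.card G := by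
        rw [sum_const, smul_eq_mul]
    _ ≤ ∑ i ∈ I with L i ≠ ⊤, 2 * #{g | g ∉ L i} :=
        sum_le_sum fun i hi => card_le_two_mul_card_filter_notMem (mem_filter.mp hi).2
    _ ≤ ∑ i ∈ I, 2 * #{g | g ∉ L i} := sum_le_sum_of_subset (filter_subset _ _)
    _ = 2 * ∑ g, #{i ∈ I | g ∉ L i} := by rw [← mul_sum, hdouble]
    _ ≤ 2 * ∑ _g : G, k := Nat.mul_le_mul_left 2 (sum_le_sum fun g _ => hk g)
    _ = 2 * k * Fintype.card G := by rw [sum_const, card_univ, smul_eq_mul]; ring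

theorem card_closure_le_prod_orderOf {G : Type*} [CommGroup G] (S : Finset G) :
    Nat.card (closure (S : Set G)) ≤ ∏ x ∈ S, orderOf x := by
  classical
  induction S using Finset.induction with
  | empty => simp
  | insert a S ha ih =>
    rw [coe_insert, Set.insert_eq, Subgroup.closure_union, prod_insert ha,
      ← zpowers_eq_closure, ← Nat.card_zpowers]
    calc Nat.card ↥(zpowers a ⊔ closure (S : Set G))
        = Nat.card ↥((zpowers a : Set G) * (closure (S : Set G) : Set G)) := by
          rw [← mul_normal]; rfl
      _ ≤ Nat.card (zpowers a) * Nat.card (closure (S : Set G)) := Set.natCard_mul_le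
      _ ≤ Nat.card (zpowers a) * ∏ x ∈ S, orderOf x := Nat.mul_le_mul_left _ ih

theorem card_mulAut_le (W : Type*) [Group W] [Finite W] :
    Nat.card (MulAut W) ≤ Nat.card W ^ Nat.card W :=
  (Nat.card_le_card_of_injective _ DFunLike.coe_injective).trans_eq Nat.card_fun

theorem card_orbits_sub_one_mul_le {X : Type*} [MulAction G X] [Finite X]
    (ω₀ : orbitRel.Quotient G X) {k : ℕ} (hk : ∀ ω, ω ≠ ω₀ → k ≤ Nat.card ω.orbit) :
    (Nat.card (orbitRel.Quotient G X) - 1) * k ≤ Nat.card X := by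
  classical
  have := Fintype.ofFinite (orbitRel.Quotient G X)
  calc (Nat.card (orbitRel.Quotient G X) - 1) * k = ∑ _ω ∈ univ.erase ω₀, k := by
        rw [sum_const, card_erase_of_mem (mem_univ _), card_univ, smul_eq_mul,
          Nat.card_eq_fintype_card]
    _ ≤ ∑ ω ∈ univ.erase ω₀, Nat.card ω.orbit :=
        sum_le_sum fun ω hω => hk ω (ne_of_mem_erase hω)
    _ ≤ ∑ ω : orbitRel.Quotient G X, Nat.card ω.orbit :=
        sum_le_sum_of_subset (erase_subset _ _)
    _ = Nat.card X := by rw [Nat.card_congr (selfEquivSigmaOrbits' G X), Nat.card_sigma]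

end Counting

variable {P : Type*} [Group P] {p : ℕ}

theorem inv_mul_apply_mem_commOfAut (a : MulAut P) (g : P) : g⁻¹ * a g ∈ commOfAut a :=
  subset_closure ⟨g, rfl⟩

theorem commOfAut_ne_bot {a : MulAut P} (ha : a ≠ 1) : commOfAut a ≠ ⊥ := by
  obtain ⟨x, hx⟩ : ∃ x, a x ≠ x := by
    by_contra! h
    exact ha (MulEquiv.ext h)
  intro h
  have hmem := inv_mul_apply_mem_commOfAut a x
  rw [h, mem_bot, inv_mul_eq_one] at hmem
  exact hx hmem.symm

theorem _root_.IsPGroup.prime_le_card_commOfAut [Fact p.Prime] [Finite P] (hP : IsPGroup p P)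
    {a : MulAut P} (ha : a ≠ 1) : p ≤ Nat.card (commOfAut a) := by
  have := (nontrivial_iff_ne_bot _).mpr (commOfAut_ne_bot ha)
  obtain ⟨n, hn, hcard⟩ := ((hP.to_subgroup _).nontrivial_iff_card).mp this
  rw [hcard]
  exact Nat.le_self_pow hn.ne' p

theorem card_le_card_commOfAut_mul_card_fixedBy [Finite P] (a : MulAut P) :
    Nat.card P ≤ Nat.card (commOfAut a) * Nat.card (fixedBy P a) := by
  let C : Subgroup P := (a : P →* P).eqLocus (MonoidHom.id P)
  -- `x ↦ a x * x⁻¹` is injective on the left cosets of the fixed points of `a`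
  have hC : ∀ x y : P, a x * x⁻¹ = a y * y⁻¹ ↔ x⁻¹ * y ∈ C := fun x y => by
    change _ ↔ a (x⁻¹ * y) = x⁻¹ * y
    rw [map_mul, map_inv, inv_mul_eq_iff_eq_mul, ← mul_assoc, eq_mul_inv_iff_mul_eq, eq_comm]
  let f : P ⧸ C → commOfAut a := Quotient.lift
    (fun x => ⟨a x * x⁻¹, by simpa using inv_mem (inv_mul_apply_mem_commOfAut a x⁻¹)⟩)
    (fun x y hxy => Subtype.ext ((hC x y).mpr (QuotientGroup.leftRel_apply.mp hxy)))
  have hf : Function.Injective f := by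
    rintro ⟨x⟩ ⟨y⟩ h
    exact QuotientGroup.eq.mpr ((hC x y).mp (congrArg Subtype.val h))
  calc Nat.card P = C.index * Nat.card C := (index_mul_card C).symm
    _ ≤ Nat.card (commOfAut a) * Nat.card (fixedBy P a) :=
        Nat.mul_le_mul (Nat.card_le_card_of_injective f hf) le_rfl

theorem card_le_mul_card_orbits [Finite P] (Γ : Subgroup (MulAut P)) {m : ℕ}
    (hm : ∀ γ ∈ Γ, Nat.card (commOfAut γ) ≤ m) :
    Nat.card P ≤ m * Nat.card (orbitRel.Quotient Γ P) := by
  classical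
  have := Fintype.ofFinite Γ
  have := Fintype.ofFinite (orbitRel.Quotient Γ P)
  have := fun γ : Γ => Fintype.ofFinite (fixedBy P γ)
  have hfix : ∀ γ : Γ, Nat.card P ≤ m * Fintype.card (fixedBy P γ) := fun γ => by
    rw [← Nat.card_eq_fintype_card]
    exact (card_le_card_commOfAut_mul_card_fixedBy (γ : MulAut P)).trans
      (Nat.mul_le_mul_right _ (hm γ γ.2))
  refine Nat.le_of_mul_le_mul_right ?_ (Fintype.card_pos (α := Γ))
  calc Nat.card P * Fintype.card Γ = ∑ _γ : Γ, Nat.card P := by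
        rw [sum_const, card_univ, smul_eq_mul, mul_comm]
    _ ≤ ∑ γ : Γ, m * Fintype.card (fixedBy P γ) := sum_le_sum fun γ _ => hfix γ
    _ = m * Nat.card (orbitRel.Quotient Γ P) * Fintype.card Γ := by
        rw [← mul_sum, sum_card_fixedBy_eq_card_orbits_mul_card_group,
          Nat.card_eq_fintype_card, mul_assoc]

theorem _root_.IsPGroup.apply_eq_self_of_apply_inv_mul_apply_eq [Fact p.Prime]
    (hP : IsPGroup p P) {a : MulAut P} (ha : ¬ p ∣ orderOf a) {x : P}
    (hx : a (x⁻¹ * a x) = x⁻¹ * a x) : a x = x := by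
  set δ := x⁻¹ * a x
  have hpow : ∀ k : ℕ, (a ^ k) x = x * δ ^ k := fun k => by
    induction k with
    | zero => simp
    | succ k ih =>
      rw [pow_succ', MulAut.mul_apply, ih, map_mul, map_pow, hx, pow_succ', ← mul_assoc,
        mul_inv_cancel_left]
  have hδ : δ ^ orderOf a = 1 := by
    simpa [pow_orderOf_eq_one] using (hpow (orderOf a)).symm
  have hcop : p.Coprime (orderOf a) := (Nat.Prime.coprime_iff_not_dvd Fact.out).mpr ha
  have : δ = 1 := (hP.powEquiv hcop).injective (by simp [IsPGroup.powEquiv_apply, hδ])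
  exact (inv_mul_eq_one.mp this).symm

def IsInvariant (A : Subgroup (MulAut P)) (V : Subgroup P) : Prop :=
  ∀ a ∈ A, ∀ x ∈ V, a x ∈ V

def IsIrreducible (A : Subgroup (MulAut P)) : Prop :=
  ∀ V : Subgroup P, IsInvariant A V → V = ⊥ ∨ V = ⊤

theorem IsInvariant.apply_mem_iff {A : Subgroup (MulAut P)} {V : Subgroup P}
    (hV : IsInvariant A V) {a : MulAut P} (ha : a ∈ A) {x : P} : a x ∈ V ↔ x ∈ V :=
  ⟨fun h => by simpa using hV a⁻¹ (inv_mem ha) _ h, hV a ha x⟩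

theorem isInvariant_of_characteristic (A : Subgroup (MulAut P)) (V : Subgroup P)
    [hV : V.Characteristic] : IsInvariant A V := fun a _ x hx => by
  rw [← hV.fixed a] at hx
  exact hx

section Irreducible

variable [Fact p.Prime] {W : Type*}

theorem IsIrreducible.isMulCommutative [Group W] [Finite W] {Γ : Subgroup (MulAut W)}
    (hW : IsPGroup p W) (hirr : IsIrreducible Γ) : IsMulCommutative W := by
  rcases subsingleton_or_nontrivial W with hs | hs
  · exact ⟨⟨fun x y => Subsingleton.elim _ _⟩⟩
  rcases hirr _ (isInvariant_of_characteristic Γ (center W)) with hZ | hZ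
  · exact absurd hZ ((nontrivial_iff_ne_bot _).mp hW.center_nontrivial)
  · exact ⟨⟨fun x y => mem_center_iff.mp (hZ ▸ mem_top y) x⟩⟩

theorem IsIrreducible.pow_eq_one [CommGroup W] [Finite W] {Γ : Subgroup (MulAut W)}
    (hW : IsPGroup p W) (hirr : IsIrreducible Γ) (x : W) : x ^ p = 1 := by
  rcases subsingleton_or_nontrivial W with hs | hs
  · exact Subsingleton.elim _ _
  have hinv : IsInvariant Γ (powMonoidHom p : W →* W).ker := fun a _ y hy => by
    simp_all [← map_pow]
  obtain ⟨y, hy⟩ := exists_prime_orderOf_dvd_card' p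
    (hW.card_eq_or_dvd.resolve_left Finite.one_lt_card.ne')
  have hker : (powMonoidHom p : W →* W).ker ≠ ⊥ := fun h => by
    have hy1 : y ∈ (powMonoidHom p : W →* W).ker := by simp [← hy, pow_orderOf_eq_one]
    rw [h, mem_bot] at hy1
    exact (Nat.Prime.ne_one Fact.out) (hy ▸ hy1 ▸ orderOf_one)
  have hx : x ∈ (powMonoidHom p : W →* W).ker := (hirr _ hinv).resolve_left hker ▸ mem_top x
  simpa using hx

theorem IsIrreducible.closure_orbit_eq_top [Group W] {Γ : Subgroup (MulAut W)}
    (hirr : IsIrreducible Γ) {x : W} (hx : x ≠ 1) : closure (orbit Γ x) = ⊤ := by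
  have hinv : IsInvariant Γ (closure (orbit Γ x)) := fun γ hγ y hy => by
    have hmap : (closure (orbit Γ x)).map (γ : W →* W) ≤ closure (orbit Γ x) := by
      rw [MonoidHom.map_closure]
      apply Subgroup.closure_mono
      rintro _ ⟨_, ⟨g, rfl⟩, rfl⟩
      exact ⟨⟨γ, hγ⟩ * g, mul_smul _ _ _⟩
    exact hmap (mem_map_of_mem _ hy)
  refine (hirr _ hinv).resolve_left fun h => hx ?_
  simpa [h] using subset_closure (mem_orbit_self x : x ∈ orbit Γ x)

theorem IsIrreducible.card_le_pow_card_orbit [CommGroup W] [Finite W] {Γ : Subgroup (MulAut W)}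
    (hW : IsPGroup p W) (hirr : IsIrreducible Γ) {x : W} (hx : x ≠ 1) :
    Nat.card W ≤ p ^ Nat.card (orbit Γ x) := by
  classical
  have := Fintype.ofFinite (orbit Γ x)
  calc Nat.card W = Nat.card (closure ((orbit Γ x).toFinset : Set W)) := by
        rw [Set.coe_toFinset, hirr.closure_orbit_eq_top hx, card_top]
    _ ≤ ∏ y ∈ (orbit Γ x).toFinset, orderOf y := card_closure_le_prod_orderOf _
    _ ≤ p ^ Nat.card (orbit Γ x) := by
        rw [Nat.card_eq_card_toFinset]
        exact prod_le_pow_card _ _ _ fun y _ =>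
          orderOf_le_of_pow_eq_one (Nat.Prime.pos Fact.out) (hirr.pow_eq_one hW y)

open scoped IsMulCommutative in
theorem IsIrreducible.card_le_pow [Group W] [Finite W] {Γ : Subgroup (MulAut W)}
    (hW : IsPGroup p W) (hirr : IsIrreducible Γ) (hΓ : Γ ≠ ⊥) {m : ℕ}
    (hm : ∀ γ ∈ Γ, Nat.card (commOfAut γ) ≤ m) : Nat.card W ≤ m ^ (2 * m) := by
  have hp : p.Prime := Fact.out
  have := hirr.isMulCommutative hW
  obtain ⟨γ, hγΓ, hγ⟩ := Γ.bot_or_exists_ne_one.resolve_left hΓ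
  have hpm : p ≤ m := (hW.prime_le_card_commOfAut hγ).trans (hm γ hγΓ)
  set n := Nat.card (orbitRel.Quotient Γ W)
  set k := Nat.clog p (Nat.card W)
  have hburnside : Nat.card W ≤ m * n := card_le_mul_card_orbits Γ hm
  have horbits : (n - 1) * k ≤ Nat.card W := by
    refine card_orbits_sub_one_mul_le ⟦1⟧ fun ω hω => Nat.clog_le_of_le_pow ?_
    rw [orbitRel.Quotient.orbit_eq_orbit_out ω Quotient.out_eq']
    refine hirr.card_le_pow_card_orbit hW fun h => hω ?_
    rw [← h]
    exact (Quotient.out_eq ω).symm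
  rcases Nat.lt_or_ge n 2 with hn | hn
  · calc Nat.card W ≤ m * n := hburnside
      _ ≤ m := by nlinarith
      _ ≤ m ^ (2 * m) := Nat.le_self_pow (by have := hp.two_le; omega) m
  · have hk : k ≤ 2 * m := by
      refine Nat.le_of_mul_le_mul_left ?_ (by omega : 0 < n - 1)
      calc (n - 1) * k ≤ m * n := horbits.trans hburnside
        _ ≤ (n - 1) * (2 * m) := by
          have := Nat.sub_add_cancel (by omega : 1 ≤ n)
          nlinarith
    calc Nat.card W ≤ p ^ k := Nat.le_pow_clog hp.one_lt _
      _ ≤ p ^ (2 * m) := Nat.pow_le_pow_right hp.pos hk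
      _ ≤ m ^ (2 * m) := Nat.pow_le_pow_left hpm _

end Irreducible

section Level

variable {A : Subgroup (MulAut P)} {N M : Subgroup P}

/-- `C_A(M/N)`, defined without forming the quotient `M/N` (`N` need not be normal in `M`). -/
def quotientCentralizer (A : Subgroup (MulAut P)) (N M : Subgroup P) (hM : IsInvariant A M) :
    Subgroup A where
  carrier := {a | ∀ x ∈ M, x⁻¹ * (a : MulAut P) x ∈ N}
  one_mem' x _ := by simp [N.one_mem]
  mul_mem' {a b} ha hb x hx := by
    have h : x⁻¹ * ((a * b : A) : MulAut P) x =
        x⁻¹ * (b : MulAut P) x * (((b : MulAut P) x)⁻¹ * (a : MulAut P) ((b : MulAut P) x)) := by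
      simp [mul_assoc]
    change _ ∈ N
    rw [h]
    exact N.mul_mem (hb x hx) (ha _ (hM b b.2 x hx))
  inv_mem' {a} ha x hx := by
    have h := N.inv_mem (ha _ (hM _ (inv_mem a.2) x hx))
    simpa using h

theorem mem_quotientCentralizer {hM : IsInvariant A M} {a : A} :
    a ∈ quotientCentralizer A N M hM ↔ ∀ x ∈ M, x⁻¹ * (a : MulAut P) x ∈ N := Iff.rfl

theorem IsInvariant.subgroupOf_normal [Fact p.Prime] [Finite P] (hP : IsPGroup p P)
    (hN : IsInvariant A N) (hM : IsInvariant A M) (hNM : N ≤ M)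
    (hcov : ∀ L, IsInvariant A L → N ≤ L → L ≤ M → L = N ∨ L = M) : (N.subgroupOf M).Normal := by
  rw [normal_subgroupOf_iff_le_normalizer hNM]
  have hL : IsInvariant A (M ⊓ normalizer (N : Set P)) := by
    rintro a ha x ⟨hxM, hxN⟩
    refine ⟨hM a ha x hxM, mem_normalizer_iff.mpr fun h => ?_⟩
    have h' : (a : MulAut P) x * h * ((a : MulAut P) x)⁻¹ = a (x * a⁻¹ h * x⁻¹) := by simp
    rw [h', hN.apply_mem_iff ha, ← mem_normalizer_iff.mp hxN, hN.apply_mem_iff (inv_mem ha)]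
  rcases hcov _ hL (le_inf hNM le_normalizer) inf_le_left with h | h
  · have : Group.IsNilpotent M := (hP.to_subgroup M).isNilpotent
    have hself : normalizer (N.subgroupOf M : Set M) = N.subgroupOf M := by
      rw [← subgroupOf_normalizer_eq hNM, ← inf_subgroupOf_left, h]
    have htop := normalizerCondition_iff_only_full_group_self_normalizing.mp
      Group.normalizerCondition_of_isNilpotent _ hself
    exact (subgroupOf_eq_top.mp htop).trans le_normalizer
  · exact inf_eq_left.mp h

theorem inf_lt_inf_of_notMem_quotientCentralizer {hM : IsInvariant A M} (hNM : N ≤ M) {a : A}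
    (ha : a ∉ quotientCentralizer A N M hM) :
    commOfAut (a : MulAut P) ⊓ N < commOfAut (a : MulAut P) ⊓ M := by
  obtain ⟨x, hx, hxN⟩ : ∃ x ∈ M, x⁻¹ * (a : MulAut P) x ∉ N := by
    simpa [mem_quotientCentralizer] using ha
  refine SetLike.lt_iff_le_and_exists.mpr
    ⟨inf_le_inf_left _ hNM, x⁻¹ * (a : MulAut P) x, ?_, fun h => hxN (mem_inf.mp h).2⟩
  exact ⟨inv_mul_apply_mem_commOfAut _ x, M.mul_mem (M.inv_mem hx) (hM a a.2 x hx)⟩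

section QuotientAut

variable (hN : IsInvariant A N) (hM : IsInvariant A M) [(N.subgroupOf M).Normal]

def quotientAut : A →* MulAut (↥M ⧸ N.subgroupOf M) :=
  letI : MulDistribMulAction A (↥M ⧸ N.subgroupOf M) :=
    { smul a := QuotientGroup.map (N.subgroupOf M) (N.subgroupOf M)
        { toFun x := ⟨(a : MulAut P) x, hM a a.2 x x.2⟩
          map_one' := by ext; simp
          map_mul' x y := by ext; simp }
        fun x hx => hN a a.2 x hx
      one_smul := by rintro ⟨x⟩; rfl
      mul_smul := by rintro a b ⟨x⟩; rfl
      smul_mul a := map_mul _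
      smul_one a := map_one _ }
  MulDistribMulAction.toMulAut A _

theorem quotientAut_mk (a : A) (x : M) :
    quotientAut hN hM a (x : ↥M ⧸ N.subgroupOf M) =
      ((⟨(a : MulAut P) x, hM a a.2 x x.2⟩ : M) : ↥M ⧸ N.subgroupOf M) :=
  rfl

theorem ker_quotientAut : (quotientAut hN hM).ker = quotientCentralizer A N M hM := by
  ext a
  rw [MonoidHom.mem_ker, mem_quotientCentralizer, MulEquiv.ext_iff]
  constructor
  · intro h x hx
    have hx' := (h ((⟨x, hx⟩ : M) : ↥M ⧸ N.subgroupOf M)).symm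
    rwa [quotientAut_mk, MulAut.one_apply, QuotientGroup.eq, mem_subgroupOf] at hx'
  · intro h w
    induction w using QuotientGroup.induction_on with | H x =>
    rw [quotientAut_mk, MulAut.one_apply, eq_comm, QuotientGroup.eq, mem_subgroupOf]
    exact h x x.2

theorem isIrreducible_range_quotientAut (hNM : N ≤ M)
    (hcov : ∀ L, IsInvariant A L → N ≤ L → L ≤ M → L = N ∨ L = M) :
    IsIrreducible (quotientAut hN hM).range := by
  intro V hV
  set L := (V.comap (QuotientGroup.mk' (N.subgroupOf M))).map M.subtype
  have hL : IsInvariant A L := by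
    rintro a ha _ ⟨x, hx, rfl⟩
    exact ⟨⟨a x, hM a ha x x.2⟩, hV _ (MonoidHom.mem_range.mpr ⟨⟨a, ha⟩, rfl⟩) _ hx, rfl⟩
  have hNL : N ≤ L := fun x hx => by
    have h1 : ((⟨x, hNM hx⟩ : M) : ↥M ⧸ N.subgroupOf M) = 1 := (QuotientGroup.eq_one_iff _).mpr hx
    exact ⟨⟨x, hNM hx⟩, by simp [h1], rfl⟩
  rcases hcov L hL hNL (map_subtype_le _) with h | h
  · refine Or.inl (eq_bot_iff.mpr fun w hw => ?_)
    obtain ⟨x, rfl⟩ := QuotientGroup.mk_surjective w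
    have hx : (x : P) ∈ L := ⟨x, hw, rfl⟩
    rw [h] at hx
    exact (QuotientGroup.eq_one_iff x).mpr hx
  · refine Or.inr (eq_top_iff.mpr fun w _ => ?_)
    obtain ⟨x, rfl⟩ := QuotientGroup.mk_surjective w
    have hx : (x : P) ∈ L := by rw [h]; exact x.2
    obtain ⟨y, hy, hyx⟩ := hx
    rwa [← Subtype.ext hyx]

theorem card_commOfAut_quotientAut_le [Finite P] (a : A) :
    Nat.card (commOfAut (quotientAut hN hM a)) ≤ Nat.card (commOfAut (a : MulAut P)) := by
  have hle : commOfAut (quotientAut hN hM a) ≤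
      ((commOfAut (a : MulAut P)).subgroupOf M).map (QuotientGroup.mk' (N.subgroupOf M)) := by
    refine (closure_le _).mpr ?_
    rintro _ ⟨w, rfl⟩
    induction w using QuotientGroup.induction_on with | H x =>
    exact ⟨x⁻¹ * ⟨(a : MulAut P) x, hM a a.2 x x.2⟩, inv_mul_apply_mem_commOfAut _ _, rfl⟩
  calc Nat.card (commOfAut (quotientAut hN hM a))
      ≤ Nat.card (((commOfAut (a : MulAut P)).subgroupOf M).map (QuotientGroup.mk' _)) :=
        card_le_of_le hle
    _ ≤ Nat.card ((commOfAut (a : MulAut P)).subgroupOf M) :=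
        Nat.le_of_dvd Nat.card_pos (card_map_dvd _ _)
    _ ≤ Nat.card (commOfAut (a : MulAut P)) :=
        Nat.card_le_card_of_injective (fun x => ⟨x.1.1, x.2⟩) fun x y h => by
          ext; simpa using congrArg Subtype.val h

end QuotientAut

theorem index_quotientCentralizer_le [Fact p.Prime] [Finite P] (hP : IsPGroup p P) {m : ℕ}
    (hmA : ∀ a ∈ A, Nat.card (commOfAut a) ≤ m) (hN : IsInvariant A N) (hM : IsInvariant A M)
    (hNM : N ≤ M) (hcov : ∀ L, IsInvariant A L → N ≤ L → L ≤ M → L = N ∨ L = M) :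
    (quotientCentralizer A N M hM).index ≤ (m ^ (2 * m)) ^ m ^ (2 * m) := by
  have := hN.subgroupOf_normal hP hM hNM hcov
  have hm : 0 < m := Nat.card_pos.trans_le (hmA 1 A.one_mem)
  rw [← ker_quotientAut hN hM, index_ker]
  rcases eq_or_ne (quotientAut hN hM).range ⊥ with hbot | hbot
  · rw [hbot, card_bot]
    exact Nat.one_le_iff_ne_zero.mpr (by positivity)
  have hW := (isIrreducible_range_quotientAut hN hM hNM hcov).card_le_pow
    ((hP.to_subgroup M).to_quotient _) hbot (m := m) (by
      rintro _ ⟨a, rfl⟩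
      exact (card_commOfAut_quotientAut_le hN hM a).trans (hmA a a.2))
  calc Nat.card (quotientAut hN hM).range
      ≤ Nat.card (MulAut (↥M ⧸ N.subgroupOf M)) := card_le_card_group _
    _ ≤ Nat.card (↥M ⧸ N.subgroupOf M) ^ Nat.card (↥M ⧸ N.subgroupOf M) := card_mulAut_le _
    _ ≤ (m ^ (2 * m)) ^ m ^ (2 * m) :=
        (Nat.pow_le_pow_left hW _).trans (Nat.pow_le_pow_right (by positivity) hW)

end Level

theorem exists_invariant_series [Finite P] (A : Subgroup (MulAut P)) :
    ∃ (N : ℕ → Subgroup P) (s : ℕ), N 0 = ⊥ ∧ N s = ⊤ ∧ (∀ i, IsInvariant A (N i)) ∧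
      ∀ i < s, N i ≤ N (i + 1) ∧
        ∀ L, IsInvariant A L → N i ≤ L → L ≤ N (i + 1) → L = N i ∨ L = N (i + 1) := by
  obtain ⟨V, hV0, s, hVs, hcov⟩ := exists_covBy_seq_of_wellFoundedLT_wellFoundedGT_of_le
    (α := {V : Subgroup P // IsInvariant A V}) (x := ⟨⊥, fun a _ x hx => by simp_all⟩)
    (y := ⟨⊤, fun _ _ _ _ => mem_top _⟩) (Subtype.mk_le_mk.mpr bot_le)
  refine ⟨fun i => V i, s, congrArg Subtype.val hV0, congrArg Subtype.val hVs, fun i => (V i).2,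
    fun i hi => ⟨(hcov i hi).le, fun L hL h0 h1 => ?_⟩⟩
  simpa [Subtype.ext_iff] using (hcov i hi).wcovBy.eq_or_eq (c := ⟨L, hL⟩) h0 h1

section Series

variable [Finite P] {A : Subgroup (MulAut P)} {N : ℕ → Subgroup P} {s : ℕ}
  (hinv : ∀ i, IsInvariant A (N i))
include hinv

theorem card_le_prod_index_quotientCentralizer [Fact p.Prime] (hP : IsPGroup p P)
    (hA : ¬ p ∣ Nat.card A) (hN0 : N 0 = ⊥) (hNs : N s = ⊤) :
    Nat.card A ≤ ∏ i ∈ range s, (quotientCentralizer A (N i) (N (i + 1)) (hinv (i + 1))).index := by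
  set B := fun i => fixingSubgroup A (N i : Set P)
  have hB0 : B 0 = ⊤ := eq_top_iff.mpr fun a _ => (mem_fixingSubgroup_iff A).mpr fun x hx => by
    rw [hN0, SetLike.mem_coe, mem_bot] at hx
    rw [hx, smul_one]
  have hBs : B s = ⊥ := eq_bot_iff.mpr fun a ha => by
    rw [mem_bot]
    ext x
    exact (mem_fixingSubgroup_iff A).mp ha x (hNs ▸ mem_top x)
  have hstep :
      ∀ i < s, B i ⊓ quotientCentralizer A (N i) (N (i + 1)) (hinv (i + 1)) ≤ B (i + 1) := by
    rintro i - a ⟨ha, haC⟩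
    refine (mem_fixingSubgroup_iff A).mpr fun x hx => ?_
    have hord : ¬ p ∣ orderOf (a : MulAut P) := by
      rw [orderOf_coe]
      exact fun h => hA (h.trans (orderOf_dvd_natCard a))
    exact hP.apply_eq_self_of_apply_inv_mul_apply_eq hord
      ((mem_fixingSubgroup_iff A).mp ha _ (haC x hx))
  have := card_le_prod_index_mul_card B _ hstep
  rwa [hB0, hBs, card_top, card_bot, mul_one] at this

open scoped Classical in
theorem two_pow_card_filter_notMem_quotientCentralizer_le (hmono : ∀ i < s, N i ≤ N (i + 1))
    (hNs : N s = ⊤) (a : A) :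
    2 ^ #{i ∈ range s | a ∉ quotientCentralizer A (N i) (N (i + 1)) (hinv (i + 1))} ≤
      Nat.card (commOfAut (a : MulAut P)) := by
  set H := fun i => commOfAut (a : MulAut P) ⊓ N i
  calc 2 ^ #{i ∈ range s | a ∉ quotientCentralizer A (N i) (N (i + 1)) (hinv (i + 1))}
      ≤ 2 ^ #{i ∈ range s | H i < H (i + 1)} := by
        refine Nat.pow_le_pow_right two_pos (card_le_card fun i hi => ?_)
        rw [mem_filter, mem_range] at hi ⊢
        exact ⟨hi.1, inf_lt_inf_of_notMem_quotientCentralizer (hmono i hi.1) hi.2⟩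
    _ ≤ Nat.card (H s) :=
        two_pow_card_filter_lt_le_card H fun i hi => inf_le_inf_left _ (hmono i hi)
    _ = Nat.card (commOfAut (a : MulAut P)) := by simp [H, hNs]

end Series

end CoprimeAction

open CoprimeAction in
theorem card_automorphisms_bounded :
    ∃ f : ℕ → ℕ, ∀ (m p : ℕ), 0 < m → p.Prime →
      ∀ (P : Type) [Group P] [Finite P], IsPGroup p P →
        ∀ A : Subgroup (MulAut P), ¬ p ∣ Nat.card A →
          (∀ a ∈ A, Nat.card (commOfAut a) ≤ m) → Nat.card A ≤ f m := by
  classical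
  refine ⟨fun m => ((m ^ (2 * m)) ^ m ^ (2 * m)) ^ (2 * Nat.log 2 m), ?_⟩
  intro m p hm hp P _ _ hP A hpA hmA
  have := Fact.mk hp
  obtain ⟨N, s, hN0, hNs, hinv, hseries⟩ := exists_invariant_series A
  have hmono i hi : N i ≤ N (i + 1) := (hseries i hi).1
  set C := fun i => quotientCentralizer A (N i) (N (i + 1)) (hinv (i + 1))
  have hlevels : #{i ∈ range s | C i ≠ ⊤} ≤ 2 * Nat.log 2 m :=
    card_filter_ne_top_le_two_mul C _ fun a => Nat.le_log_of_pow_le one_lt_two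
      ((two_pow_card_filter_notMem_quotientCentralizer_le hinv hmono hNs a).trans (hmA a a.2))
  calc Nat.card A ≤ ∏ i ∈ range s, (C i).index :=
        card_le_prod_index_quotientCentralizer hinv hP hpA hN0 hNs
    _ = ∏ i ∈ range s with C i ≠ ⊤, (C i).index :=
        (prod_filter_of_ne fun i _ h => mt index_eq_one.mpr h).symm
    _ ≤ ((m ^ (2 * m)) ^ m ^ (2 * m)) ^ #{i ∈ range s | C i ≠ ⊤} :=
        prod_le_pow_card _ _ _ fun i hi => index_quotientCentralizer_le hP hmA (hinv i)
          (hinv (i + 1)) (hmono i (mem_range.mp (mem_filter.mp hi).1))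
          ((hseries i (mem_range.mp (mem_filter.mp hi).1)).2)
    _ ≤ ((m ^ (2 * m)) ^ m ^ (2 * m)) ^ (2 * Nat.log 2 m) :=
        Nat.pow_le_pow_right (by positivity) hlevels
end
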